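/- arXiv:1608.02850 — 5 statements merged into one kernel-verified Lean document; each statement's English description precedes it below -/
import Mathlib

section
/- If U is a fine ultrafilter on the set of finite subsets of a sample space Ω (fine meaning: for every a ∈ Ω, the set of finite subsets containing a belongs to U), then the NAP function P_U is regular, i.e., P_U(A) > 0 for every nonempty A ⊆ Ω. -/
open Filter Classical

/-- The collection of nonempty finite subsets of `Ω`. -/
abbrev FinSubsets (Ω : Type*) := {s : Finset Ω // s.Nonempty}

/-- `P(A | λ) = |A ∩ λ| / |λ|`. -/
noncomputable def condP {Ω : Type*} (A : Set Ω) (l : FinSubsets Ω) : ℝ :=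
  (l.1.filter (· ∈ A)).card / l.1.card

/-- The NAP function `P_U` with values in the ultrapower `ℝ^Λ/U`. -/
noncomputable def PU {Ω : Type*} (U : Ultrafilter (FinSubsets Ω)) (A : Set Ω) :
    Filter.Germ (U : Filter (FinSubsets Ω)) ℝ :=
  ↑(fun l => condP A l)

/-- An ultrafilter on `Λ` is fine iff for every `a ∈ Ω` the set of finite subsets
containing `a` belongs to it. -/
def Fine {Ω : Type*} (U : Ultrafilter (FinSubsets Ω)) : Prop :=
  ∀ a : Ω, {l : FinSubsets Ω | a ∈ l.1} ∈ U

theorem stmt0 {Ω : Type*} (U : Ultrafilter (FinSubsets Ω)) (hfine : Fine U) :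
    ∀ A : Set Ω, A.Nonempty → 0 < PU U A := by
  intro A ⟨a, ha⟩
  have h0 : (0 : Filter.Germ (U : Filter (FinSubsets Ω)) ℝ) = ↑(fun _ : FinSubsets Ω => (0:ℝ)) := rfl
  rw [PU, h0, Filter.Germ.coe_lt]
  filter_upwards [hfine a] with l hl
  have hpos : 0 < (l.1.filter (· ∈ A)).card := by
    refine Finset.card_pos.2 ⟨a, ?_⟩
    simp [Finset.mem_filter, hl, ha]
  exact div_pos (by exact_mod_cast hpos) (by exact_mod_cast Finset.card_pos.2 l.2)
end

section
/- Given a regular NAP function P taking values in a non-Archimedean ordered field extension K of ℝ, define C(B, A) = st(P(B ∩ A)/P(A)) for nonempty A, where st denotes the standard part (the unique real infinitesimally close to a finite element of K). Then C satisfies the multiplication axiom of Popper functions: C(A ∩ B, D) = C(A, D) · C(B, A ∩ D) for all A, B and all nonempty D with A ∩ D nonempty. -/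
/-!
The conditional ratios `x = P(A ∩ D)/P(D)` and `y = P(B ∩ A ∩ D)/P(A ∩ D)` lie in `[0, 1]`
(finite additivity and regularity make `P` monotone and nonnegative), and their product is
`P(A ∩ B ∩ D)/P(D)`. So it suffices that the standard part is multiplicative on finite elements:
`xy - st x · st y = (y - st y) x + (x - st x) st y` is infinitesimal, and so is
`xy - st (xy)`; hence the real number `st (xy) - st x · st y` is infinitesimal, i.e. zero.
-/

section Infinitesimals

variable {K : Type*} [Field K] [LinearOrder K] [IsStrictOrderedRing K] (ι : ℝ →+* K)

def IsInfinitesimal (e : K) : Prop := ∀ m : ℕ, 0 < m → |e| < ι (1 / m)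

def IsFiniteElement (x : K) : Prop := ∃ n : ℕ, |x| ≤ ι n

lemma isFiniteElement_of_mem_Icc {x : K} (hx : x ∈ Set.Icc 0 1) : IsFiniteElement ι x :=
  ⟨1, by rw [abs_of_nonneg hx.1, Nat.cast_one, map_one]; exact hx.2⟩

variable {ι}

lemma RingHom.map_abs_of_monotone (hι : Monotone ι) (r : ℝ) : ι |r| = |ι r| := by
  rw [abs_eq_max_neg, abs_eq_max_neg, hι.map_max, map_neg]

lemma IsInfinitesimal.of_abs_le_add {e f g : K} (he : IsInfinitesimal ι e)
    (hf : IsInfinitesimal ι f) (hg : |g| ≤ |e| + |f|) : IsInfinitesimal ι g := by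
  intro m hm
  have h2m : 0 < 2 * m := by positivity
  have halves : ι (1 / (2 * m : ℕ)) + ι (1 / (2 * m : ℕ)) = ι (1 / m) := by
    rw [← map_add]; congr 1; push_cast; field_simp; norm_num
  calc |g| ≤ |e| + |f| := hg
    _ < ι (1 / (2 * m : ℕ)) + ι (1 / (2 * m : ℕ)) := add_lt_add (he _ h2m) (hf _ h2m)
    _ = ι (1 / m) := halves

lemma IsInfinitesimal.add {e f : K} (he : IsInfinitesimal ι e) (hf : IsInfinitesimal ι f) :
    IsInfinitesimal ι (e + f) :=
  he.of_abs_le_add hf (abs_add_le e f)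

lemma IsInfinitesimal.sub {e f : K} (he : IsInfinitesimal ι e) (hf : IsInfinitesimal ι f) :
    IsInfinitesimal ι (e - f) :=
  he.of_abs_le_add hf (abs_sub e f)

lemma IsInfinitesimal.mul_isFiniteElement (hι : StrictMono ι) {e x : K}
    (he : IsInfinitesimal ι e) (hx : IsFiniteElement ι x) : IsInfinitesimal ι (e * x) := by
  obtain ⟨n, hn⟩ := hx
  intro m hm
  have hpos : (0 : K) < ι (n + 1) := by
    rw [← map_zero ι]; exact hι (by positivity)
  have hmn : 0 < m * (n + 1) := by positivity
  calc |e * x| = |e| * |x| := abs_mul e x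
    _ ≤ |e| * ι (n + 1) := by
        gcongr; exact hn.trans (hι.monotone (by linarith))
    _ < ι (1 / (m * (n + 1) : ℕ)) * ι (n + 1) := mul_lt_mul_of_pos_right (he _ hmn) hpos
    _ = ι (1 / m) := by
        rw [← map_mul]; congr 1; push_cast; field_simp

lemma IsFiniteElement.mul {x y : K} (hx : IsFiniteElement ι x)
    (hy : IsFiniteElement ι y) : IsFiniteElement ι (x * y) := by
  obtain ⟨n, hn⟩ := hx
  obtain ⟨k, hk⟩ := hy
  refine ⟨n * k, ?_⟩
  rw [abs_mul, Nat.cast_mul, map_mul]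
  exact mul_le_mul hn hk (abs_nonneg y) ((abs_nonneg x).trans hn)

lemma eq_zero_of_isInfinitesimal_map (hι : StrictMono ι) {r : ℝ}
    (hr : IsInfinitesimal ι (ι r)) : r = 0 := by
  by_contra hne
  obtain ⟨n, hn⟩ := exists_nat_one_div_lt (abs_pos.mpr hne)
  have hlt := hr (n + 1) n.succ_pos
  rw [← RingHom.map_abs_of_monotone hι.monotone, hι.lt_iff_lt] at hlt
  push_cast at hlt
  linarith

variable (st : K → ℝ)

lemma IsFiniteElement.map_st
    (hst : ∀ x : K, IsFiniteElement ι x → IsInfinitesimal ι (x - ι (st x)))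
    {x : K} (hx : IsFiniteElement ι x) : IsFiniteElement ι (ι (st x)) := by
  obtain ⟨n, hn⟩ := hx
  refine ⟨n + 1, ?_⟩
  have hclose : |x - ι (st x)| < 1 := by simpa using hst x ⟨n, hn⟩ 1 one_pos
  calc |ι (st x)| ≤ |x| + |x - ι (st x)| := by
        linarith [abs_sub_abs_le_abs_sub (ι (st x)) x, abs_sub_comm x (ι (st x))]
    _ ≤ ι n + 1 := add_le_add hn hclose.le
    _ = ι (n + 1 : ℕ) := by push_cast; rw [map_add, map_one]

lemma st_mul
    (hst : ∀ x : K, IsFiniteElement ι x → IsInfinitesimal ι (x - ι (st x)))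
    (hι : StrictMono ι) {x y : K} (hx : IsFiniteElement ι x) (hy : IsFiniteElement ι y) :
    st (x * y) = st x * st y := by
  have hprod : IsInfinitesimal ι (x * y - ι (st x * st y)) := by
    have hsplit : x * y - ι (st x * st y)
        = (y - ι (st y)) * x + (x - ι (st x)) * ι (st y) := by rw [map_mul]; ring
    rw [hsplit]
    exact ((hst y hy).mul_isFiniteElement hι hx).add
      ((hst x hx).mul_isFiniteElement hι (hy.map_st st hst))
  refine sub_eq_zero.mp (eq_zero_of_isInfinitesimal_map hι ?_)
  have hdiff := hprod.sub (hst _ (hx.mul hy))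
  rwa [sub_sub_sub_cancel_left, ← map_sub] at hdiff

end Infinitesimals

section RegularProbability

variable {Ω K : Type*} [Field K] [LinearOrder K] [IsStrictOrderedRing K] {P : Set Ω → K}

lemma empty_eq_zero_of_additive
    (hadd : ∀ A B : Set Ω, Disjoint A B → P (A ∪ B) = P A + P B) : P ∅ = 0 := by
  have h := hadd ∅ ∅ (Set.disjoint_empty ∅)
  rw [Set.union_empty] at h
  linarith

lemma nonneg_of_additive_of_regular
    (hadd : ∀ A B : Set Ω, Disjoint A B → P (A ∪ B) = P A + P B)
    (hreg : ∀ A : Set Ω, A.Nonempty → 0 < P A) (S : Set Ω) : 0 ≤ P S := by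
  rcases S.eq_empty_or_nonempty with hS | hS
  · rw [hS, empty_eq_zero_of_additive hadd]
  · exact (hreg S hS).le

lemma monotone_of_additive_of_regular
    (hadd : ∀ A B : Set Ω, Disjoint A B → P (A ∪ B) = P A + P B)
    (hreg : ∀ A : Set Ω, A.Nonempty → 0 < P A) {S T : Set Ω} (hST : S ⊆ T) :
    P S ≤ P T := by
  have hsplit : P T = P S + P (T \ S) := by
    rw [← hadd S (T \ S) Set.disjoint_sdiff_right, Set.union_sdiff_cancel hST]
  linarith [nonneg_of_additive_of_regular hadd hreg (T \ S)]

lemma condRatio_mem_Icc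
    (hadd : ∀ A B : Set Ω, Disjoint A B → P (A ∪ B) = P A + P B)
    (hreg : ∀ A : Set Ω, A.Nonempty → 0 < P A) (B : Set Ω) {A : Set Ω} (hA : A.Nonempty) :
    P (B ∩ A) / P A ∈ Set.Icc 0 1 :=
  ⟨div_nonneg (nonneg_of_additive_of_regular hadd hreg _) (hreg A hA).le,
    (div_le_one (hreg A hA)).mpr 
      (monotone_of_additive_of_regular hadd hreg Set.inter_subset_right)⟩

end RegularProbability

theorem stmt4_general {Ω : Type*} {K : Type*} [Field K] [LinearOrder K] [IsStrictOrderedRing K]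
    (ι : ℝ →+* K) (hι : StrictMono ι)
    (P : Set Ω → K)
    (hadd : ∀ A B : Set Ω, Disjoint A B → P (A ∪ B) = P A + P B)
    (hreg : ∀ A : Set Ω, A.Nonempty → 0 < P A)
    (st : K → ℝ)
    -- `st x` is the real infinitesimally close to any finite `x`:
    (hst : ∀ x : K, (∃ n : ℕ, |x| ≤ ι n) →
      ∀ m : ℕ, 0 < m → |x - ι (st x)| < ι (1 / m))
    (C : Set Ω → Set Ω → ℝ)
    (hC : ∀ A B : Set Ω, B.Nonempty → C A B = st (P (A ∩ B) / P B)) :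
    ∀ A B D : Set Ω, D.Nonempty → (A ∩ D).Nonempty →
      C (A ∩ B) D = C A D * C B (A ∩ D) := by
  intro A B D hD hAD
  have hchain :
      P ((A ∩ B) ∩ D) / P D = P (A ∩ D) / P D * (P (B ∩ (A ∩ D)) / P (A ∩ D)) := by
    rw [Set.inter_right_comm, Set.inter_comm _ B, div_mul_div_cancel₀' (hreg _ hAD).ne']
  rw [hC (A ∩ B) D hD, hC A D hD, hC B (A ∩ D) hAD, hchain]
  exact st_mul st hst hι (isFiniteElement_of_mem_Icc ι (condRatio_mem_Icc hadd hreg A hD))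
    (isFiniteElement_of_mem_Icc ι (condRatio_mem_Icc hadd hreg B hAD))

/-- Multiplication axiom of Popper functions for `C(B, A) = st(P(B ∩ A)/P(A))`,
where `P` is a regular finitely additive non-Archimedean probability function. -/
theorem stmt4 {Ω : Type*} {K : Type*} [Field K] [LinearOrder K] [IsStrictOrderedRing K]
    (ι : ℝ →+* K) (hι : StrictMono ι)
    (P : Set Ω → K)
    (hadd : ∀ A B : Set Ω, Disjoint A B → P (A ∪ B) = P A + P B)
    (hnorm : P Set.univ = 1)
    (hreg : ∀ A : Set Ω, A.Nonempty → 0 < P A)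
    (st : K → ℝ)
    -- `st x` is the real infinitesimally close to any finite `x`:
    (hst : ∀ x : K, (∃ n : ℕ, |x| ≤ ι n) →
      ∀ m : ℕ, 0 < m → |x - ι (st x)| < ι (1 / m))
    (C : Set Ω → Set Ω → ℝ)
    (hC : ∀ A B : Set Ω, B.Nonempty → C A B = st (P (A ∩ B) / P B)) :
    ∀ A B D : Set Ω, D.Nonempty → (A ∩ D).Nonempty →
      C (A ∩ B) D = C A D * C B (A ∩ D) :=
  stmt4_general ι hι P hadd hreg st hst C hC
end

section
/- There exists a non-Archimedean probability-like counterexample showing an NAP function cannot match every Popper function on the same sample space: define P₁(A) = ε·δ₀(A) + (1−ε)·Σ_{n∈A, n≥1} 2^{−n} on subsets of ℕ, where ε is a positive infinitesimal in a non-Archimedean field extension of ℝ and δ₀(A) = 1 if 0 ∈ A, 0 otherwise. Then P₁ is a regular, finitely additive probability function, and P₁({0} | {0,1}) = P₁({0})/P₁({0,1}) is a positive infinitesimal, so st(P₁({0}|{0,1})) = 0. -/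
/-!
`P₁` gives the atom `0` the infinitesimal mass `ε` and `{1}` the mass `(1 - ε) / 2`, which is
not infinitesimal; hence `P₁({0} | {0, 1}) = 2ε / (1 + ε)` lies strictly between `0` and `2ε`.
Regularity holds because every `n ≥ 1` has mass `(1 - ε) 2⁻ⁿ > 0`; this needs `ι` to be monotone,
which every ring homomorphism out of `ℝ` is, since nonnegative reals are squares.
-/

open scoped Classical

/-- `Σ_{n ∈ A, n ≥ 1} 2^{-n}` as a real number. -/
noncomputable def geomPart (A : Set ℕ) : ℝ :=
  ∑' n : ℕ, Set.indicator (A ∩ {n : ℕ | 1 ≤ n}) (fun n => (1 / 2 : ℝ) ^ n) n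

lemma summable_geomPart (A : Set ℕ) :
    Summable (Set.indicator (A ∩ {n : ℕ | 1 ≤ n}) (fun n => (1 / 2 : ℝ) ^ n)) :=
  summable_geometric_two.indicator _

lemma geomPart_nonneg (A : Set ℕ) : 0 ≤ geomPart A :=
  tsum_nonneg fun n => Set.indicator_nonneg (fun m _ => by positivity) n

lemma geomPart_pos {A : Set ℕ} {n : ℕ} (hn : n ∈ A) (h1 : 1 ≤ n) : 0 < geomPart A := by
  have hle := (summable_geomPart A).le_tsum n
    (fun m _ => Set.indicator_nonneg (fun m _ => by positivity) m)
  rw [Set.indicator_of_mem (show n ∈ A ∩ {n | 1 ≤ n} from ⟨hn, h1⟩)] at hle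
  exact (pow_pos (by norm_num) n).trans_le hle

lemma geomPart_union {A B : Set ℕ} (h : Disjoint A B) :
    geomPart (A ∪ B) = geomPart A + geomPart B := by
  unfold geomPart
  rw [← (summable_geomPart A).tsum_add (summable_geomPart B), Set.union_inter_distrib_right]
  exact tsum_congr fun n => congrFun (Set.indicator_union_of_disjoint
    (h.mono Set.inter_subset_left Set.inter_subset_left) _) n

lemma geomPart_univ : geomPart Set.univ = 1 := by
  unfold geomPart
  rw [(summable_geomPart _).tsum_eq_zero_add]
  simp only [Set.univ_inter, Set.mem_ofPred_eq, Nat.one_le_iff_ne_zero, ne_eq, not_true_eq_false,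
    not_false_eq_true, Set.indicator_of_notMem, Nat.add_one_ne_zero, Set.indicator_of_mem, zero_add,
    pow_succ', tsum_mul_left, tsum_geometric_two]
  norm_num

lemma geomPart_singleton_zero : geomPart {0} = 0 := by
  unfold geomPart
  refine (tsum_congr fun n => Set.indicator_of_notMem ?_ _).trans tsum_zero
  rintro ⟨rfl, h⟩
  exact absurd h (by norm_num)

lemma geomPart_pair_zero_one : geomPart {0, 1} = 1 / 2 := by
  unfold geomPart
  rw [tsum_eq_single 1 fun n hn => Set.indicator_of_notMem ?_ _]
  · rw [Set.indicator_of_mem (by simp)]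
    norm_num
  · rintro ⟨h | h, h1⟩ <;> simp_all

lemma RingHom.strictMono_of_real {K : Type*} [Field K] [LinearOrder K] [IsStrictOrderedRing K]
    (ι : ℝ →+* K) : StrictMono ι :=
  (ringHom_monotone (fun _ => Real.isSquare_iff.mpr) ι).strictMono_of_injective ι.injective

section

variable {K : Type*} [Field K]

noncomputable def atomMixture (ι : ℝ →+* K) (ε : K) (A : Set ℕ) : K :=
  ε * (if (0 : ℕ) ∈ A then 1 else 0) + (1 - ε) * ι (geomPart A)

variable (ι : ℝ →+* K) (ε : K)

lemma atomMixture_union {A B : Set ℕ} (h : Disjoint A B) :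
    atomMixture ι ε (A ∪ B) = atomMixture ι ε A + atomMixture ι ε B := by
  rcases em (0 ∈ A) with hA | hA
  · simp only [atomMixture, Set.mem_union, hA, Set.disjoint_left.mp h hA, or_false, if_true,
      if_false, geomPart_union h, map_add]
    ring
  · simp only [atomMixture, Set.mem_union, hA, false_or, if_false, geomPart_union h, map_add]
    ring

lemma atomMixture_univ : atomMixture ι ε Set.univ = 1 := by
  simp [atomMixture, geomPart_univ]

lemma atomMixture_singleton_zero : atomMixture ι ε {0} = ε := by
  simp [atomMixture, geomPart_singleton_zero]

variable [LinearOrder K] [IsStrictOrderedRing K]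

lemma atomMixture_pair_zero_one : atomMixture ι ε {0, 1} = (1 + ε) / 2 := by
  simp only [atomMixture, geomPart_pair_zero_one, Set.mem_insert_iff, true_or, if_true, map_div₀,
    map_one, map_ofNat]
  ring

lemma atomMixture_cond_zero :
    atomMixture ι ε {0} / atomMixture ι ε {0, 1} = 2 * ε / (1 + ε) := by
  rw [atomMixture_singleton_zero, atomMixture_pair_zero_one, div_div_eq_mul_div, mul_comm]

variable {ι ε}

lemma atomMixture_pos (hε0 : 0 < ε) (hε1 : ε < 1) {A : Set ℕ} (hA : A.Nonempty) :
    0 < atomMixture ι ε A := by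
  have hmono := ι.strictMono_of_real
  obtain ⟨a, ha⟩ := hA
  by_cases h0 : 0 ∈ A
  · have : 0 ≤ ι (geomPart A) := map_zero ι ▸ hmono.monotone (geomPart_nonneg A)
    rw [atomMixture, if_pos h0]
    nlinarith
  · have : 0 < ι (geomPart A) :=
      map_zero ι ▸ hmono (geomPart_pos ha (Nat.pos_of_ne_zero (ne_of_mem_of_not_mem ha h0)))
    rw [atomMixture, if_neg h0]
    nlinarith

end

theorem stmt6_general {K : Type*} [Field K] [LinearOrder K] [IsStrictOrderedRing K]
    (ι : ℝ →+* K)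
    (ε : K) (hε0 : 0 < ε) (hεinf : ∀ n : ℕ, 0 < n → ε < ι (1 / n))
    (P₁ : Set ℕ → K)
    (hP₁ : ∀ A : Set ℕ,
      P₁ A = ε * (if (0 : ℕ) ∈ A then 1 else 0) + (1 - ε) * ι (geomPart A)) :
    (∀ A : Set ℕ, A.Nonempty → 0 < P₁ A) ∧
    (∀ A B : Set ℕ, Disjoint A B → P₁ (A ∪ B) = P₁ A + P₁ B) ∧
    P₁ Set.univ = 1 ∧
    (0 < P₁ {0} / P₁ {0, 1} ∧ ∀ n : ℕ, 0 < n → P₁ {0} / P₁ {0, 1} < ι (1 / n)) := by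
  obtain rfl : P₁ = atomMixture ι ε := funext hP₁
  have hε1 : ε < 1 := by simpa using hεinf 1 one_pos
  refine ⟨fun A => atomMixture_pos hε0 hε1, fun A B => atomMixture_union ι ε,
    atomMixture_univ ι ε, ?_, fun n hn => ?_⟩
  · rw [atomMixture_cond_zero]
    positivity
  · have hε2n : ε < ι (1 / n) / 2 := by
      simpa [div_eq_mul_inv, mul_comm, map_ofNat] using hεinf (2 * n) (by omega)
    calc atomMixture ι ε {0} / atomMixture ι ε {0, 1} = 2 * ε / (1 + ε) :=
          atomMixture_cond_zero ι ε
      _ ≤ 2 * ε := div_le_self (by positivity) (by linarith)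
      _ < ι (1 / n) := by linarith

/-- Pedersen's counterexample: `P₁(A) = ε·δ₀(A) + (1−ε)·Σ_{n∈A, n≥1} 2^{−n}`
is a regular finitely additive probability function on `ℕ` whose conditional
probability `P₁({0}|{0,1})` is a positive infinitesimal (so its standard part is 0). -/
theorem stmt6 {K : Type*} [Field K] [LinearOrder K] [IsStrictOrderedRing K]
    (ι : ℝ →+* K) (hι : StrictMono ι)
    (ε : K) (hε0 : 0 < ε) (hεinf : ∀ n : ℕ, 0 < n → ε < ι (1 / n))
    (P₁ : Set ℕ → K)
    (hP₁ : ∀ A : Set ℕ,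
      P₁ A = ε * (if (0 : ℕ) ∈ A then 1 else 0) + (1 - ε) * ι (geomPart A)) :
    (∀ A : Set ℕ, A.Nonempty → 0 < P₁ A) ∧
    (∀ A B : Set ℕ, Disjoint A B → P₁ (A ∪ B) = P₁ A + P₁ B) ∧
    P₁ Set.univ = 1 ∧
    (0 < P₁ {0} / P₁ {0, 1} ∧ ∀ n : ℕ, 0 < n → P₁ {0} / P₁ {0, 1} < ι (1 / n)) :=
  stmt6_general ι ε hε0 hεinf P₁ hP₁
end

section
/- In the iterated ultrafilter construction, if each U_α is fine on Λ_α ⊆ 𝒫_fin(Ω_α) for an increasing family Ω_α with union Ω, and for each x ∈ Ω the set {α : x ∈ Ω_α} contains an end-segment of κ and Ũ contains all end-segments, then U is fine on ⋃_α Λ_α: for every x ∈ Ω, {λ : x ∈ λ} ∈ U. -/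
/-- In the iterated ultrafilter construction, if each `U_α` is fine on the
nonempty finite subsets of `Ω_α` (for an increasing family `Ω_α` with union `Ω`),
every point of `Ω` lies in `Ω_α` for an end-segment of indices, and `Ũ` contains
all end-segments, then the resulting ultrafilter `U` is fine: for every `x ∈ Ω`,
`{λ : x ∈ λ} ∈ U`. -/
theorem stmt12 {I : Type*} [LinearOrder I]
    {Ω : Type*} (Ωα : I → Set Ω)
    (hmono : ∀ α β : I, α ≤ β → Ωα α ⊆ Ωα β)
    (hunion : (⋃ α : I, Ωα α) = Set.univ)
    (Λα : I → Set (FinSubsets Ω))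
    (hΛα : ∀ α : I, Λα α = {l : FinSubsets Ω | ↑l.1 ⊆ Ωα α})
    (Uα : ∀ α : I, Ultrafilter (Λα α))
    (hfine : ∀ (α : I) (x : Ω), x ∈ Ωα α →
      {l : Λα α | x ∈ (l : FinSubsets Ω).1} ∈ Uα α)
    (hx : ∀ x : Ω, ∃ β : I, ∀ α : I, β < α → x ∈ Ωα α)
    (Ut : Ultrafilter I)
    (hUt : ∀ β : I, {α : I | β < α} ∈ Ut)
    (U : Ultrafilter (FinSubsets Ω))
    (hU : ∀ X : Set (FinSubsets Ω),
      X ∈ U ↔ {α : I | (Subtype.val ⁻¹' X : Set (Λα α)) ∈ Uα α} ∈ Ut) :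
    ∀ x : Ω, {l : FinSubsets Ω | x ∈ l.1} ∈ U := by
  intro x
  obtain ⟨β, hβ⟩ := hx x
  rw [hU]
  filter_upwards [hUt β] with α hα
  exact hfine α x (hβ α hα)
end

section
/- Under the rank-cardinality conditions, higher-rank blocks contribute infinitesimally: if λ ∈ Λ satisfies |b̄_d ∩ λ| > |b̄_h ∩ λ|² (d of lower rank than h, and the cardinalities are positive), then with weights bounded by positive reals on each block, the ratio of the weighted measure of b̄_h ∩ λ to that of (b̄_d ∪ b̄_h) ∩ λ is at most M/|b̄_h ∩ λ| for a constant M depending only on the weight bounds; in particular for every n ∈ ℕ there is μ ∈ Λ such that for all λ ⊇ μ in Λ this ratio is less than 1/n. -/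
open scoped Classical

/-- Higher-rank blocks contribute only infinitesimally: under the
rank-cardinality condition `|b̄_h ∩ λ|² < |b̄_d ∩ λ|`, the ratio of the weighted
measure of `b̄_h ∩ λ` to that of `(b̄_d ∪ b̄_h) ∩ λ` is at most `M/|b̄_h ∩ λ|`
for a constant `M` depending only on the weights; in particular along the
directed family `Λ` the ratio eventually drops below `1/n` for every `n`. -/
theorem stmt15 {Ω : Type*} (bd bh : Set Ω)
    (hdisj : Disjoint bd bh) (hbd : bd.Infinite) (hbh : bh.Infinite)
    (wd wh : ℝ) (hwd : 0 < wd) (hwh : 0 < wh)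
    (w : Ω → ℝ) (hwdc : ∀ x ∈ bd, w x = wd) (hwhc : ∀ x ∈ bh, w x = wh)
    (Λ : Set (Finset Ω))
    (hΛcond : ∀ l ∈ Λ, (l.filter (· ∈ bh)).card ^ 2 < (l.filter (· ∈ bd)).card)
    (hdir : ∀ l₁ ∈ Λ, ∀ l₂ ∈ Λ, ∃ l₃ ∈ Λ, l₁ ⊆ l₃ ∧ l₂ ⊆ l₃)
    (hcover : ∀ x : Ω, ∃ l ∈ Λ, x ∈ l) :
    ∃ M : ℝ, 0 < M ∧
      (∀ l ∈ Λ, 0 < (l.filter (· ∈ bh)).card →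
        (∑ x ∈ l.filter (· ∈ bh), w x) /
            (∑ x ∈ l.filter (· ∈ bd ∪ bh), w x) ≤
          M / (l.filter (· ∈ bh)).card) ∧
      (∀ n : ℕ, 0 < n → ∃ μ ∈ Λ, ∀ l ∈ Λ, μ ⊆ l →
        (∑ x ∈ l.filter (· ∈ bh), w x) /
            (∑ x ∈ l.filter (· ∈ bd ∪ bh), w x) < 1 / n) := by
  -- sums
  have hsumh : ∀ l : Finset Ω, (∑ x ∈ l.filter (· ∈ bh), w x)
      = ((l.filter (· ∈ bh)).card : ℝ) * wh := by
    intro l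
    rw [Finset.sum_congr rfl (fun x hx => hwhc x (Finset.mem_filter.mp hx).2),
      Finset.sum_const, nsmul_eq_mul]
  have hsumd : ∀ l : Finset Ω, (∑ x ∈ l.filter (· ∈ bd), w x)
      = ((l.filter (· ∈ bd)).card : ℝ) * wd := by
    intro l
    rw [Finset.sum_congr rfl (fun x hx => hwdc x (Finset.mem_filter.mp hx).2),
      Finset.sum_const, nsmul_eq_mul]
  have hsplit : ∀ l : Finset Ω, (∑ x ∈ l.filter (· ∈ bd ∪ bh), w x)
      = ((l.filter (· ∈ bd)).card : ℝ) * wd + ((l.filter (· ∈ bh)).card : ℝ) * wh := by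
    intro l
    have h1 : l.filter (· ∈ bd ∪ bh) = l.filter (· ∈ bd) ∪ l.filter (· ∈ bh) := by
      simp only [Set.mem_union, Finset.filter_or]
    have h2 : Disjoint (l.filter (· ∈ bd)) (l.filter (· ∈ bh)) := by
      apply Finset.disjoint_filter_filter'
      exact hdisj
    rw [h1, Finset.sum_union h2, hsumd, hsumh]
  -- the main ratio bound
  have ratio_le : ∀ l ∈ Λ, ∀ c : ℝ, ((l.filter (· ∈ bh)).card : ℝ) * wd > c * wh →
      0 ≤ c →
      (∑ x ∈ l.filter (· ∈ bh), w x) / (∑ x ∈ l.filter (· ∈ bd ∪ bh), w x)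
        * c < 1 := by
    intro l hl c hc hc0
    set a := ((l.filter (· ∈ bd)).card : ℝ) with ha
    set b := ((l.filter (· ∈ bh)).card : ℝ) with hb
    have hab : b ^ 2 < a := by
      rw [ha, hb]; exact_mod_cast hΛcond l hl
    have hb0 : 0 ≤ b := by positivity
    have hden : 0 < a * wd + b * wh := by nlinarith
    rw [hsumh, hsplit]
    rw [div_mul_eq_mul_div, div_lt_one hden]
    nlinarith [mul_nonneg hb0 (le_of_lt (sub_pos.mpr hc))]
  refine ⟨wh / wd, div_pos hwh hwd, ?_, ?_⟩
  · intro l hl hpos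
    set a := ((l.filter (· ∈ bd)).card : ℝ) with ha
    set b := ((l.filter (· ∈ bh)).card : ℝ) with hb
    have hab : b ^ 2 < a := by rw [ha, hb]; exact_mod_cast hΛcond l hl
    have hb0 : (0:ℝ) < b := by rw [hb]; exact_mod_cast hpos
    have hden : 0 < a * wd + b * wh := by nlinarith
    rw [hsumh, hsplit, div_le_div_iff₀ hden hb0]
    have : b^2 * wh ≤ a * wh := by nlinarith
    calc b * wh * b = b^2 * wh := by ring
      _ ≤ a * wh := this
      _ ≤ wh / wd * (a * wd + b * wh) := by
          rw [div_mul_eq_mul_div, le_div_iff₀ hwd]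
          nlinarith [mul_nonneg hwh.le (mul_nonneg hb0.le hwh.le)]
  · intro n hn
    -- find N with N * wd > n * wh
    obtain ⟨N, hN⟩ := exists_nat_gt ((n : ℝ) * wh / wd)
    have hNwd : (N : ℝ) * wd > (n : ℝ) * wh := by
      rw [gt_iff_lt, ← div_lt_iff₀ hwd] at *
      linarith [hN]
    -- finite subset of bh of card N
    obtain ⟨S, hSsub, hScard⟩ := hbh.exists_subset_card_eq N
    -- find μ ∈ Λ containing S
    have hbig : ∀ t : Finset Ω, ∃ μ ∈ Λ, ∀ x ∈ t, x ∈ μ := by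
      intro t
      induction t using Finset.induction_on with
      | empty =>
        obtain ⟨x, _⟩ := hbd.nonempty
        obtain ⟨l, hl, _⟩ := hcover x
        exact ⟨l, hl, by simp⟩
      | @insert a s _ ih =>
        obtain ⟨μ, hμ, hsub⟩ := ih
        obtain ⟨l, hl, hxl⟩ := hcover a
        obtain ⟨m, hm, h1, h2⟩ := hdir l hl μ hμ
        refine ⟨m, hm, fun y hy => ?_⟩
        rcases Finset.mem_insert.mp hy with rfl | hy
        · exact h1 hxl
        · exact h2 (hsub y hy)
    obtain ⟨μ, hμ, hμsub⟩ := hbig S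
    refine ⟨μ, hμ, fun l hl hlsub => ?_⟩
    have hSl : S ⊆ l.filter (· ∈ bh) := by
      intro x hx
      exact Finset.mem_filter.mpr ⟨hlsub (hμsub x hx), hSsub hx⟩
    have hcard : N ≤ (l.filter (· ∈ bh)).card := hScard ▸ Finset.card_le_card hSl
    have hbwd : ((l.filter (· ∈ bh)).card : ℝ) * wd > (n : ℝ) * wh := by
      have : (N : ℝ) ≤ ((l.filter (· ∈ bh)).card : ℝ) := by exact_mod_cast hcard
      nlinarith
    have key := ratio_le l hl (n : ℝ) hbwd (by positivity)
    have hn' : (0:ℝ) < (n:ℝ) := by exact_mod_cast hn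
    rw [lt_div_iff₀ hn']
    exact key
end
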